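/- arXiv:2403.03275 — 4 statements merged into one kernel-verified Lean document; each statement's English description precedes it below -/
import Mathlib

section
/- For all a,b>0, N≥2 and (τ_2,…,τ_N)∈{0,1}^{N−1}, one has f_N(0,τ_2,…,τ_N)=(1+a)·f_{N−1}(τ_2,…,τ_N). -/
/-! Prepending `0` to `τ` and `c` to `ξ` shifts every difference `s^τ(j) − s^ξ(j)`, `j ≥ 1`, by `−c`
and adds the value `0` at `j = 0`; as the old minimum is already `≤ 0`, the minimum just drops by
`c`. Hence the `ξ`-summand is multiplied by `b^(−c) (ab)^c = a^c`, and summing over `c ∈ {0, 1}`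
gives the factor `1 + a`. -/

open Finset

/-- Partial sum `s^τ(k) = τ_1 + ⋯ + τ_k` of a word `τ ∈ {0,1}^N`. -/
def pSum {N : ℕ} (τ : Fin N → Fin 2) (k : ℕ) : ℤ :=
  ∑ i : Fin N, if (i : ℕ) < k then ((τ i : ℕ) : ℤ) else 0

/-- `min_{0 ≤ j ≤ N} (s^τ(j) − s^ξ(j))`. -/
def minDiff {N : ℕ} (τ ξ : Fin N → Fin 2) : ℤ :=
  (Finset.range (N + 1)).inf' (by simp) fun j => pSum τ j - pSum ξ j

/-- `f_N(τ) = Σ_ξ b^(s^τ(N)−s^ξ(N)) (ab)^(−min_{0≤j≤N}(s^τ(j)−s^ξ(j)))`. -/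
noncomputable def fTL (a b : ℝ) {N : ℕ} (τ : Fin N → Fin 2) : ℝ :=
  ∑ ξ : Fin N → Fin 2, b ^ (pSum τ N - pSum ξ N) * (a * b) ^ (-(minDiff τ ξ))

lemma sum_fin_succ_pi {α M : Type*} [Fintype α] [AddCommMonoid M] {n : ℕ}
    (f : (Fin (n + 1) → α) → M) : ∑ x, f x = ∑ c, ∑ ξ : Fin n → α, f (Fin.cons c ξ) := by
  rw [← (Fin.consEquiv fun _ => α).sum_comp, Fintype.sum_prod_type]
  rfl

lemma pSum_zero {N : ℕ} (τ : Fin N → Fin 2) : pSum τ 0 = 0 := by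
  simp [pSum]

lemma pSum_cons_succ {N : ℕ} (c : Fin 2) (τ : Fin N → Fin 2) (k : ℕ) :
    pSum (Fin.cons c τ) (k + 1) = ((c : ℕ) : ℤ) + pSum τ k := by
  simp [pSum, Fin.sum_univ_succ]

lemma minDiff_nonpos {N : ℕ} (τ ξ : Fin N → Fin 2) : minDiff τ ξ ≤ 0 := by
  have h : minDiff τ ξ ≤ pSum τ 0 - pSum ξ 0 := inf'_le _ (mem_range.2 N.succ_pos)
  rwa [pSum_zero, pSum_zero, sub_zero] at h

lemma minDiff_cons {N : ℕ} (d c : Fin 2) (τ ξ : Fin N → Fin 2) :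
    minDiff (Fin.cons d τ) (Fin.cons c ξ) = min 0 (((d : ℕ) : ℤ) - (c : ℕ) + minDiff τ ξ) := by
  have shift := map_finset_inf' (OrderIso.addLeft (((d : ℕ) : ℤ) - (c : ℕ)))
    (nonempty_range_add_one (n := N)) fun j => pSum τ j - pSum ξ j
  rw [OrderIso.addLeft_apply] at shift
  rw [minDiff, minDiff, shift]
  simp only [range_add_one' (N + 1)]
  rw [inf'_insert (by simp), inf'_map]
  simp only [pSum_zero, sub_zero, Function.comp_def, OrderIso.addLeft_apply]
  congr 2
  funext j
  show pSum _ (j + 1) - pSum _ (j + 1) = _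
  rw [pSum_cons_succ, pSum_cons_succ]
  ring

noncomputable def fTLSummand (a b : ℝ) {N : ℕ} (τ ξ : Fin N → Fin 2) : ℝ :=
  b ^ (pSum τ N - pSum ξ N) * (a * b) ^ (-(minDiff τ ξ))

lemma fTL_eq_sum_fTLSummand (a b : ℝ) {N : ℕ} (τ : Fin N → Fin 2) :
    fTL a b τ = ∑ ξ, fTLSummand a b τ ξ :=
  rfl

lemma fTLSummand_cons_zero {a b : ℝ} (ha : a ≠ 0) (hb : b ≠ 0) {N : ℕ} (c : Fin 2)
    (τ ξ : Fin N → Fin 2) :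
    fTLSummand a b (Fin.cons 0 τ) (Fin.cons c ξ) = a ^ (c : ℕ) * fTLSummand a b τ ξ := by
  rw [fTLSummand, fTLSummand, pSum_cons_succ, pSum_cons_succ, minDiff_cons]
  simp only [Fin.val_zero, CharP.cast_eq_zero, zero_add, zero_sub]
  rw [min_eq_right (by linarith [minDiff_nonpos τ ξ, Int.natCast_nonneg (c : ℕ)]),
    show pSum τ N - (c + pSum ξ N) = pSum τ N - pSum ξ N - (c : ℕ) by ring,
    show -(-((c : ℕ) : ℤ) + minDiff τ ξ) = (c : ℕ) + -minDiff τ ξ by ring,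
    zpow_sub₀ hb, zpow_add₀ (mul_ne_zero ha hb), zpow_natCast, zpow_natCast, mul_pow]
  field_simp

theorem stmt1_general (a b : ℝ) (ha : 0 < a) (hb : 0 < b) (N : ℕ)
    (τ : Fin N → Fin 2) :
    fTL a b (Fin.cons (0 : Fin 2) τ) = (1 + a) * fTL a b τ := by
  calc fTL a b (Fin.cons (0 : Fin 2) τ)
      = ∑ c : Fin 2, a ^ (c : ℕ) * ∑ ξ, fTLSummand a b τ ξ := by
        simp only [fTL_eq_sum_fTLSummand, sum_fin_succ_pi, fTLSummand_cons_zero ha.ne' hb.ne',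
          mul_sum]
    _ = (1 + a) * fTL a b τ := by
        simp [Fin.sum_univ_two, fTL_eq_sum_fTLSummand, add_mul]

theorem stmt1 (a b : ℝ) (ha : 0 < a) (hb : 0 < b) (N : ℕ) (hN : 1 ≤ N)
    (τ : Fin N → Fin 2) :
    fTL a b (Fin.cons (0 : Fin 2) τ) = (1 + a) * fTL a b τ :=
  stmt1_general a b ha hb N τ
end

section
/- Fix a,b>0 with ab<1. Let ρ:[0,1]→[0,1] be nondecreasing and right-continuous, f(x)=∫_0^x ρ(t)dt, G_*(x)=min(max(ρ(x), a/(1+a)), 1/(1+b)) and g_*(x)=∫_0^x G_*(t)dt. Then for every measurable σ:[0,1]→[0,1] and g(x)=∫_0^x σ(t)dt one has J*(f,g) ≥ J*(f,g_*); consequently the infimum of J*(f,g) over all such g is attained at g_* and equals J_*(f,G_*). -/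
/-!
Write `G = G_*`, `w = σ - ρ`, `K x = ∫₀ˣ w` and let `x₀` maximize `K` on `[0,1]`, so that
`min (f - g) = -K x₀`. With `D = log G - log (1 - G)`, Gibbs' inequality
`h(σ) ≥ σ log G + (1 - σ) log (1 - G) = [ρ log G + (1 - ρ) log (1 - G)] + w D` gives
`J*(f,g) - J_*(f,G) ≥ ∫₀^x₀ w (D - log a) + ∫_x₀^1 w (D + log b)`.
Since `ab < 1`, `D` is nondecreasing with values in `[log a, -log b]`; by the layer-cake formula
both integrals are nonnegative, because `w` has nonnegative integral over every `[x, x₀]` and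
nonpositive integral over every `[x₀, x]`. For `σ = G` every step is an equality: `D = log a`
where `ρ < G`, `D = -log b` where `ρ > G`, and as `ρ - G` is nondecreasing the minimum of
`∫₀ˣ (ρ - G)` is `∫₀¹ min (ρ - G) 0`.
-/

open Finset

/-- `h(x) = x log x + (1−x) log(1−x)` (with `0·log 0 = 0`, as `Real.log 0 = 0`). -/
noncomputable def hEnt (x : ℝ) : ℝ := x * Real.log x + (1 - x) * Real.log (1 - x)

/-- `J*(f,g) = ∫₀¹ h(σ) + log(ab)·min_{[0,1]}(f−g) − log(b)·(f(1)−g(1))`, where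
`g(x) = ∫₀ˣ σ(t) dt` is encoded by its density `σ`. -/
noncomputable def Jstar (a b : ℝ) (f σ : ℝ → ℝ) : ℝ :=
  (∫ x in (0:ℝ)..1, hEnt (σ x))
    + Real.log (a * b) * sInf ((fun x => f x - ∫ t in (0:ℝ)..x, σ t) '' Set.Icc 0 1)
    - Real.log b * (f 1 - ∫ t in (0:ℝ)..1, σ t)

/-- `J_*(f,G) = ∫₀¹ [ρ log G + (1−ρ) log(1−G)]`, where `f(x) = ∫₀ˣ ρ(t) dt`. -/
noncomputable def Jlow (ρ G : ℝ → ℝ) : ℝ :=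
  ∫ x in (0:ℝ)..1, (ρ x * Real.log (G x) + (1 - ρ x) * Real.log (1 - G x))

open MeasureTheory Set Real

theorem intervalIntegrable_of_abs_le {f : ℝ → ℝ} {p q C : ℝ} (hf : AEStronglyMeasurable f)
    (hC : ∀ x ∈ uIcc p q, |f x| ≤ C) : IntervalIntegrable f volume p q :=
  (Measure.integrableOn_of_bounded isCompact_uIcc.measure_lt_top.ne hf
    (ae_restrict_of_forall_mem measurableSet_uIcc hC)).intervalIntegrable

theorem IntervalIntegrable.mul_of_abs_le {w D : ℝ → ℝ} {p q C : ℝ}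
    (hw : IntervalIntegrable w volume p q) (hD : AEStronglyMeasurable D)
    (hC : ∀ x ∈ uIcc p q, |D x| ≤ C) : IntervalIntegrable (fun x => w x * D x) volume p q :=
  intervalIntegrable_iff.2 <| (intervalIntegrable_iff.1 hw).mul_bdd hD.restrict
    (ae_restrict_of_forall_mem measurableSet_uIoc fun x hx => hC x (uIoc_subset_uIcc hx))

theorem intervalIntegral_congr_of_eqOn_Icc {f g : ℝ → ℝ} {p q x : ℝ}
    (h : EqOn f g (Icc p q)) (hx : x ∈ Icc p q) : ∫ t in p..x, f t = ∫ t in p..x, g t :=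
  intervalIntegral.integral_congr fun _ ht =>
    h (uIcc_subset_Icc (left_mem_Icc.2 (hx.1.trans hx.2)) hx ht)

theorem exists_cut_of_downward_closed {P : ℝ → Prop} {a b : ℝ} (hab : a ≤ b)
    (hP : ∀ x ∈ Icc a b, ∀ y ∈ Icc a b, x ≤ y → P y → P x) :
    ∃ c ∈ Icc a b, (∀ x ∈ Ico a c, P x) ∧ ∀ x ∈ Ioc c b, ¬ P x := by
  set S := insert a {x ∈ Icc a b | P x}
  have hSb : ∀ x ∈ S, x ≤ b := by rintro x (rfl | ⟨hx, -⟩); exacts [hab, hx.2]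
  have hS : BddAbove S := ⟨b, hSb⟩
  have haS : a ≤ sSup S := le_csSup hS (mem_insert _ _)
  refine ⟨sSup S, ⟨haS, csSup_le (insert_nonempty _ _) hSb⟩, ?_, ?_⟩
  · rintro x ⟨hax, hxc⟩
    obtain ⟨y, hyS, hxy⟩ := exists_lt_of_lt_csSup (insert_nonempty _ _) hxc
    rcases hyS with rfl | ⟨hy, hPy⟩
    · exact absurd hxy (not_lt.2 hax)
    · exact hP x ⟨hax, hxy.le.trans hy.2⟩ y hy hxy.le hPy
  · rintro x ⟨hcx, hxb⟩ hPx
    exact not_le.2 hcx (le_csSup hS (Or.inr ⟨⟨haS.trans hcx.le, hxb⟩, hPx⟩))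

theorem setIntegral_eq_intervalIntegral_of_Ioo_subset_of_subset_Icc {w : ℝ → ℝ} {A : Set ℝ}
    {l r : ℝ} (hlr : l ≤ r) (hIoo : Ioo l r ⊆ A) (hIcc : A ⊆ Icc l r) :
    ∫ x in A, w x = ∫ x in l..r, w x := by
  have hA : A =ᵐ[volume] Ioo l r :=
    ((LE.le.eventuallyLE hIcc).trans Ioo_ae_eq_Icc.symm.le).antisymm
      (LE.le.eventuallyLE hIoo)
  rw [setIntegral_congr_set (hA.trans Ioo_ae_eq_Ioc), intervalIntegral.integral_of_le hlr]

theorem integral_mul_eq_integral_superlevel {α : Type*} [MeasurableSpace α] {μ : Measure α}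
    [SFinite μ] {w E : α → ℝ} {C : ℝ} (hw : Integrable w μ) (hE : Measurable E)
    (hE0 : ∀ᵐ x ∂μ, 0 ≤ E x) (hEC : ∀ᵐ x ∂μ, E x ≤ C) :
    ∫ x, w x * E x ∂μ = ∫ s in Icc 0 C, ∫ x in {x | s < E x}, w x ∂μ := by
  set F : α → ℝ → ℝ := fun x s =>
    {p : α × ℝ | p.2 < E p.1}.indicator (fun p => w p.1) (x, s)
  have hF : Integrable (Function.uncurry F) (μ.prod (volume.restrict (Icc 0 C))) :=
    (hw.comp_fst _).indicator (measurableSet_lt measurable_snd (hE.comp measurable_fst))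
  have h_inner : ∀ᵐ x ∂μ, ∫ s in Icc 0 C, F x s = w x * E x := by
    filter_upwards [hE0, hEC] with x h0 hC
    have : Icc 0 C ∩ Iio (E x) = Ico 0 (E x) := by
      ext s; simp only [mem_inter_iff, Set.mem_Icc, Set.mem_Iio, Set.mem_Ico]
      constructor
      · rintro ⟨⟨hs, -⟩, h⟩; exact ⟨hs, h⟩
      · rintro ⟨hs, h⟩; exact ⟨⟨hs, h.le.trans hC⟩, h⟩
    change ∫ s in Icc 0 C, (Iio (E x)).indicator (fun _ => w x) s = _
    rw [setIntegral_indicator measurableSet_Iio, this, setIntegral_const,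
      Real.volume_real_Ico_of_le h0, smul_eq_mul, sub_zero, mul_comm]
  have h_outer : ∀ s, ∫ x, F x s ∂μ = ∫ x in {x | s < E x}, w x ∂μ := fun s =>
    integral_indicator (measurableSet_lt measurable_const hE)
  calc ∫ x, w x * E x ∂μ = ∫ x, (∫ s in Icc 0 C, F x s) ∂μ :=
        (integral_congr_ae h_inner).symm
    _ = ∫ s in Icc 0 C, (∫ x, F x s ∂μ) := integral_integral_swap hF
    _ = _ := by simp only [h_outer]

theorem Monotone.integral_mul_nonneg {w E : ℝ → ℝ} {p q : ℝ} (hpq : p ≤ q)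
    (hE : Monotone E) (hEp : 0 ≤ E p) (hw : IntervalIntegrable w volume p q)
    (htail : ∀ x ∈ Icc p q, 0 ≤ ∫ t in x..q, w t) :
    0 ≤ ∫ x in p..q, w x * E x := by
  rw [intervalIntegral.integral_of_le hpq, integral_mul_eq_integral_superlevel (C := E q)
    hw.1 hE.measurable
    (ae_restrict_of_forall_mem measurableSet_Ioc fun x hx => hEp.trans (hE hx.1.le))
    (ae_restrict_of_forall_mem measurableSet_Ioc fun x hx => hE hx.2)]
  refine setIntegral_nonneg measurableSet_Icc fun s _ => ?_
  rw [Measure.restrict_restrict (measurableSet_lt measurable_const hE.measurable)]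
  -- The superlevel set `{s < E} ∩ (p, q]` is an interval ending at `q`, up to its left endpoint.
  obtain ⟨c, hc, hbelow, habove⟩ := exists_cut_of_downward_closed (P := fun x => ¬ s < E x)
    hpq fun x _ y _ hxy h hlt => h (hlt.trans_le (hE hxy))
  rw [setIntegral_eq_intervalIntegral_of_Ioo_subset_of_subset_Icc
    (A := {x | s < E x} ∩ Ioc p q) hc.2
    (fun x hx => ⟨not_not.1 (habove x ⟨hx.1, hx.2.le⟩), hc.1.trans_lt hx.1, hx.2.le⟩)
    (fun x hx => ⟨not_lt.1 fun hxc => hbelow x ⟨hx.2.1.le, hxc⟩ hx.1, hx.2.2⟩)]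
  exact htail c hc

theorem Antitone.integral_mul_nonneg {w E : ℝ → ℝ} {p q : ℝ} (hpq : p ≤ q)
    (hE : Antitone E) (hEq : 0 ≤ E q) (hw : IntervalIntegrable w volume p q)
    (hhead : ∀ x ∈ Icc p q, 0 ≤ ∫ t in p..x, w t) :
    0 ≤ ∫ x in p..q, w x * E x := by
  rw [intervalIntegral.integral_of_le hpq, integral_mul_eq_integral_superlevel (C := E p)
    hw.1 hE.measurable
    (ae_restrict_of_forall_mem measurableSet_Ioc fun x hx => hEq.trans (hE hx.2))
    (ae_restrict_of_forall_mem measurableSet_Ioc fun x hx => hE hx.1.le)]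
  refine setIntegral_nonneg measurableSet_Icc fun s _ => ?_
  rw [Measure.restrict_restrict (measurableSet_lt measurable_const hE.measurable)]
  obtain ⟨c, hc, hbelow, habove⟩ := exists_cut_of_downward_closed (P := fun x => s < E x) hpq
    fun x _ y _ hxy h => h.trans_le (hE hxy)
  rw [setIntegral_eq_intervalIntegral_of_Ioo_subset_of_subset_Icc
    (A := {x | s < E x} ∩ Ioc p q) hc.1
    (fun x hx => ⟨hbelow x ⟨hx.1.le, hx.2⟩, hx.1, hx.2.le.trans hc.2⟩)
    (fun x hx => ⟨hx.2.1.le, not_lt.1 fun hcx => habove x ⟨hcx, hx.2.2⟩ hx.1⟩)]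
  exact hhead c hc

theorem integral_mul_ge_of_isMaxOn_primitive {w D : ℝ → ℝ} {p q x₀ l r : ℝ}
    (hw : IntervalIntegrable w volume p q) (hD : Monotone D) (hl : l ≤ D p) (hr : D q ≤ r)
    (hx₀ : x₀ ∈ Icc p q) (hmax : IsMaxOn (fun x => ∫ t in p..x, w t) (Icc p q) x₀) :
    l * (∫ t in p..x₀, w t) + r * ∫ t in x₀..q, w t ≤ ∫ x in p..q, w x * D x := by
  have hpq := hx₀.1.trans hx₀.2
  have hwi : ∀ x ∈ Icc p q, ∀ y ∈ Icc p q, IntervalIntegrable w volume x y :=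
    fun x hx y hy => hw.mono_set (uIcc_subset_uIcc (Icc_subset_uIcc hx) (Icc_subset_uIcc hy))
  have hwD : ∀ x ∈ Icc p q, ∀ y ∈ Icc p q,
      IntervalIntegrable (fun t => w t * D t) volume x y := fun x hx y hy =>
    (hwi x hx y hy).mul_of_abs_le hD.measurable.aestronglyMeasurable fun t ht =>
      abs_le_max_abs_abs (hD (uIcc_subset_Icc hx hy ht).1) (hD (uIcc_subset_Icc hx hy ht).2)
  have hp : p ∈ Icc p q := left_mem_Icc.2 hpq
  have hq : q ∈ Icc p q := right_mem_Icc.2 hpq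
  have h_left : 0 ≤ ∫ x in p..x₀, w x * (D x - l) := by
    refine Monotone.integral_mul_nonneg hx₀.1 (fun x y h => sub_le_sub_right (hD h) l)
      (sub_nonneg.2 hl) (hwi p hp x₀ hx₀) fun x hx => ?_
    have hx' : x ∈ Icc p q := ⟨hx.1, hx.2.trans hx₀.2⟩
    rw [← intervalIntegral.integral_interval_sub_left (hwi p hp x₀ hx₀) (hwi p hp x hx')]
    exact sub_nonneg.2 (hmax hx')
  have h_right : 0 ≤ ∫ x in x₀..q, -w x * (r - D x) := by
    refine Antitone.integral_mul_nonneg hx₀.2 (fun x y h => sub_le_sub_left (hD h) r)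
      (sub_nonneg.2 hr) (hwi x₀ hx₀ q hq).neg fun x hx => ?_
    have hx' : x ∈ Icc p q := ⟨hx₀.1.trans hx.1, hx.2⟩
    rw [intervalIntegral.integral_neg,
      ← intervalIntegral.integral_interval_sub_left (hwi p hp x hx') (hwi p hp x₀ hx₀)]
    exact neg_nonneg.2 (sub_nonpos.2 (hmax hx'))
  have e_left : ∫ x in p..x₀, w x * (D x - l) =
      (∫ x in p..x₀, w x * D x) - l * ∫ x in p..x₀, w x := by
    simp_rw [show ∀ x, w x * (D x - l) = w x * D x - l * w x from fun x => by ring]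
    rw [intervalIntegral.integral_sub (hwD p hp x₀ hx₀) ((hwi p hp x₀ hx₀).const_mul l),
      intervalIntegral.integral_const_mul]
  have e_right : ∫ x in x₀..q, -w x * (r - D x) =
      (∫ x in x₀..q, w x * D x) - r * ∫ x in x₀..q, w x := by
    simp_rw [show ∀ x, -w x * (r - D x) = w x * D x - r * w x from fun x => by ring]
    rw [intervalIntegral.integral_sub (hwD x₀ hx₀ q hq) ((hwi x₀ hx₀ q hq).const_mul r),
      intervalIntegral.integral_const_mul]
  rw [← intervalIntegral.integral_add_adjacent_intervals (hwD p hp x₀ hx₀) (hwD x₀ hx₀ q hq)]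
  linarith

theorem MonotoneOn.sInf_image_primitive {u : ℝ → ℝ} {a b : ℝ} (hab : a ≤ b)
    (hu : MonotoneOn u (Icc a b)) :
    sInf ((fun x => ∫ t in a..x, u t) '' Icc a b) = ∫ t in a..b, min (u t) 0 := by
  have hu' : MonotoneOn (fun t => min (u t) 0) (Icc a b) :=
    fun x hx y hy hxy => min_le_min_right 0 (hu hx hy hxy)
  have hi : ∀ x ∈ Icc a b, ∀ y ∈ Icc a b, IntervalIntegrable u volume x y ∧
      IntervalIntegrable (fun t => min (u t) 0) volume x y := fun x hx y hy =>
    ⟨(hu.mono (uIcc_subset_Icc hx hy)).intervalIntegrable,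
      (hu'.mono (uIcc_subset_Icc hx hy)).intervalIntegrable⟩
  have ha : a ∈ Icc a b := left_mem_Icc.2 hab
  have hb : b ∈ Icc a b := right_mem_Icc.2 hab
  have htail : ∀ x ∈ Icc a b, ∫ t in a..b, min (u t) 0 =
      (∫ t in a..x, min (u t) 0) + ∫ t in x..b, min (u t) 0 := fun x hx =>
    (intervalIntegral.integral_add_adjacent_intervals (hi a ha x hx).2 (hi x hx b hb).2).symm
  obtain ⟨c, hc, hneg, hnonneg⟩ := exists_cut_of_downward_closed (P := fun x => u x < 0) hab
    fun x hx y hy hxy h => (hu hx hy hxy).trans_lt h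
  refine IsLeast.csInf_eq ⟨⟨c, hc, ?_⟩, ?_⟩
  · have h_ac : ∫ t in a..c, u t = ∫ t in a..c, min (u t) 0 :=
      intervalIntegral.integral_congr_Ioo_of_le hc.1 fun x hx =>
        (min_eq_left (hneg x ⟨hx.1.le, hx.2⟩).le).symm
    have h_cb : ∫ t in c..b, min (u t) 0 = 0 := by
      rw [intervalIntegral.integral_congr_Ioo_of_le hc.2 fun x hx =>
        min_eq_right (not_lt.1 (hnonneg x ⟨hx.1, hx.2.le⟩))]
      simp
    simp only [htail c hc, h_ac, h_cb, add_zero]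
  · rintro _ ⟨x, hx, rfl⟩
    have h_xb : ∫ t in x..b, min (u t) 0 ≤ 0 := by
      simpa using intervalIntegral.integral_mono_on hx.2 (hi x hx b hb).2
        intervalIntegrable_const fun t _ => min_le_right (u t) 0
    have h_ax : ∫ t in a..x, min (u t) 0 ≤ ∫ t in a..x, u t :=
      intervalIntegral.integral_mono_on hx.1 (hi a ha x hx).2 (hi a ha x hx).1
        fun t _ => min_le_left _ _
    rw [htail x hx]
    linarith

theorem hEnt_eq_neg_binEntropy (x : ℝ) : hEnt x = -binEntropy x := by
  simp only [hEnt, binEntropy, log_inv]; ring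

theorem abs_hEnt_le {x : ℝ} (h₀ : 0 ≤ x) (h₁ : x ≤ 1) : |hEnt x| ≤ log 2 := by
  rw [hEnt_eq_neg_binEntropy, abs_neg, abs_of_nonneg (binEntropy_nonneg h₀ h₁)]
  exact binEntropy_le_log_two

theorem continuous_hEnt : Continuous hEnt :=
  binEntropy_continuous.neg.congr fun x => (hEnt_eq_neg_binEntropy x).symm

theorem sub_le_mul_sub_log {s G : ℝ} (hs : 0 ≤ s) (hG : 0 < G) :
    s - G ≤ s * (log s - log G) := by
  rcases hs.eq_or_lt with rfl | hs
  · simp [hG.le]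
  have h := mul_le_mul_of_nonneg_left (self_sub_one_le_mul_log (div_nonneg hs.le hG.le)) hG.le
  rw [log_div hs.ne' hG.ne'] at h
  field_simp at h
  linarith

theorem mul_log_add_mul_log_le_hEnt {s G : ℝ} (hs₀ : 0 ≤ s) (hs₁ : s ≤ 1) (hG₀ : 0 < G)
    (hG₁ : G < 1) :
    s * log G + (1 - s) * log (1 - G) ≤ hEnt s := by
  have h₁ := sub_le_mul_sub_log hs₀ hG₀
  have h₂ := sub_le_mul_sub_log (sub_nonneg.2 hs₁) (sub_pos.2 hG₁)
  simp only [hEnt]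
  linarith

noncomputable def logOdds (p : ℝ) : ℝ := log p - log (1 - p)

theorem logOdds_le_logOdds {x y : ℝ} (hx : 0 < x) (hxy : x ≤ y) (hy : y < 1) :
    logOdds x ≤ logOdds y := by
  have := log_le_log hx hxy
  have := log_le_log (sub_pos.2 hy) (sub_le_sub_left hxy 1)
  simp only [logOdds]
  linarith

theorem logOdds_div_one_add {a : ℝ} (ha : 0 < a) : logOdds (a / (1 + a)) = log a := by
  have h : 1 - a / (1 + a) = 1 / (1 + a) := by field_simp; ring
  rw [logOdds, h, log_div ha.ne' (by positivity), log_div one_ne_zero (by positivity), log_one]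
  ring

theorem logOdds_one_div_one_add {b : ℝ} (hb : 0 < b) : logOdds (1 / (1 + b)) = -log b := by
  have h : 1 - 1 / (1 + b) = b / (1 + b) := by field_simp; ring
  rw [logOdds, h, log_div hb.ne' (by positivity), log_div one_ne_zero (by positivity), log_one]
  ring

theorem one_div_one_add_lt_one {b : ℝ} (hb : 0 < b) : 1 / (1 + b) < 1 := by
  rw [div_lt_one (by positivity)]
  linarith

noncomputable def Gstar (a b : ℝ) (ρ : ℝ → ℝ) (x : ℝ) : ℝ :=
  min (max (ρ x) (a / (1 + a))) (1 / (1 + b))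

section Gstar

variable {a b : ℝ} {ρ : ℝ → ℝ}

theorem div_one_add_lt_one_div_one_add (ha : 0 < a) (hb : 0 < b) (hab : a * b < 1) :
    a / (1 + a) < 1 / (1 + b) := by
  rw [div_lt_div_iff₀ (by positivity) (by positivity)]
  linarith

theorem Gstar_mem_Icc (ha : 0 < a) (hb : 0 < b) (hab : a * b < 1) (x : ℝ) :
    Gstar a b ρ x ∈ Icc (a / (1 + a)) (1 / (1 + b)) :=
  ⟨le_min (le_max_right _ _) (div_one_add_lt_one_div_one_add ha hb hab).le, min_le_right _ _⟩

theorem Gstar_mem_Ioo (ha : 0 < a) (hb : 0 < b) (hab : a * b < 1) (x : ℝ) :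
    Gstar a b ρ x ∈ Ioo (0:ℝ) 1 := by
  have h := Gstar_mem_Icc (ρ := ρ) ha hb hab x
  exact ⟨lt_of_lt_of_le (by positivity) h.1, lt_of_le_of_lt h.2 (one_div_one_add_lt_one hb)⟩

theorem monotone_Gstar (hρ : Monotone ρ) : Monotone (Gstar a b ρ) :=
  fun _ _ h => min_le_min_right _ (max_le_max_right _ (hρ h))

theorem Gstar_congr {ρ' : ℝ → ℝ} {s : Set ℝ} (h : EqOn ρ ρ' s) :
    EqOn (Gstar a b ρ) (Gstar a b ρ') s := fun x hx => by simp only [Gstar, h hx]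

theorem logOdds_Gstar_mem_Icc (ha : 0 < a) (hb : 0 < b) (hab : a * b < 1) (x : ℝ) :
    logOdds (Gstar a b ρ x) ∈ Icc (log a) (-log b) := by
  have h := Gstar_mem_Icc (ρ := ρ) ha hb hab x
  have h' := Gstar_mem_Ioo (ρ := ρ) ha hb hab x
  constructor
  · rw [← logOdds_div_one_add ha]
    exact logOdds_le_logOdds (by positivity) h.1 h'.2
  · rw [← logOdds_one_div_one_add hb]
    exact logOdds_le_logOdds h'.1 h.2 (one_div_one_add_lt_one hb)

theorem monotone_logOdds_Gstar (ha : 0 < a) (hb : 0 < b) (hab : a * b < 1) (hρ : Monotone ρ) :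
    Monotone fun x => logOdds (Gstar a b ρ x) := fun x y h =>
  logOdds_le_logOdds (Gstar_mem_Ioo ha hb hab x).1 (monotone_Gstar hρ h)
    (Gstar_mem_Ioo ha hb hab y).2

theorem sub_Gstar_mul_logOdds (ha : 0 < a) (hb : 0 < b) (hab : a * b < 1) (x : ℝ) :
    (ρ x - Gstar a b ρ x) * logOdds (Gstar a b ρ x) =
      log a * min (ρ x - Gstar a b ρ x) 0 - log b * max (ρ x - Gstar a b ρ x) 0 := by
  have hαβ := div_one_add_lt_one_div_one_add ha hb hab
  rcases lt_trichotomy (ρ x) (Gstar a b ρ x) with h | h | h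
  · have hG : Gstar a b ρ x = a / (1 + a) := by
      simp only [Gstar, min_def, max_def] at h ⊢
      split_ifs at h ⊢ <;> linarith
    rw [min_eq_left (by linarith), max_eq_right (by linarith), hG, logOdds_div_one_add ha]
    ring
  · rw [h]; simp
  · have hG : Gstar a b ρ x = 1 / (1 + b) := by
      simp only [Gstar, min_def, max_def] at h ⊢
      split_ifs at h ⊢ <;> linarith
    rw [min_eq_right (by linarith), max_eq_left (by linarith), hG, logOdds_one_div_one_add hb]
    ring

theorem intervalIntegrable_mul_log_Gstar (ha : 0 < a) (hb : 0 < b) (hab : a * b < 1)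
    (hρ : Monotone ρ) {p q : ℝ} :
    IntervalIntegrable
      (fun x => ρ x * log (Gstar a b ρ x) + (1 - ρ x) * log (1 - Gstar a b ρ x)) volume p q := by
  have h : ∀ x, ρ x * log (Gstar a b ρ x) + (1 - ρ x) * log (1 - Gstar a b ρ x) =
      ρ x * logOdds (Gstar a b ρ x) + log (1 - Gstar a b ρ x) := fun x => by
    simp only [logOdds]; ring
  simp only [h]
  refine (hρ.intervalIntegrable.mul_of_abs_le
    (monotone_logOdds_Gstar ha hb hab hρ).measurable.aestronglyMeasurable fun x _ =>
      abs_le_max_abs_abs (logOdds_Gstar_mem_Icc ha hb hab x).1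
        (logOdds_Gstar_mem_Icc ha hb hab x).2).add (Antitone.intervalIntegrable ?_)
  exact fun x y h => log_le_log (sub_pos.2 (Gstar_mem_Ioo ha hb hab y).2)
    (sub_le_sub_left (monotone_Gstar hρ h) 1)

theorem Jlow_Gstar_add_le_integral_hEnt (ha : 0 < a) (hb : 0 < b) (hab : a * b < 1)
    (hρ : Monotone ρ) {σ : ℝ → ℝ} (hσ : Measurable σ) (hσi : IntervalIntegrable σ volume 0 1)
    (hσ01 : ∀ x ∈ Icc (0:ℝ) 1, σ x ∈ Icc (0:ℝ) 1) :
    Jlow ρ (Gstar a b ρ) + ∫ x in (0:ℝ)..1, (σ x - ρ x) * logOdds (Gstar a b ρ x) ≤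
      ∫ x in (0:ℝ)..1, hEnt (σ x) := by
  have hσ01' : ∀ x ∈ uIcc (0:ℝ) 1, σ x ∈ Icc (0:ℝ) 1 := by
    rwa [Set.uIcc_of_le zero_le_one]
  have hwD := (hσi.sub hρ.intervalIntegrable).mul_of_abs_le
    (monotone_logOdds_Gstar ha hb hab hρ).measurable.aestronglyMeasurable
    fun x _ => abs_le_max_abs_abs (logOdds_Gstar_mem_Icc ha hb hab x).1
      (logOdds_Gstar_mem_Icc ha hb hab x).2
  rw [Jlow, ← intervalIntegral.integral_add (intervalIntegrable_mul_log_Gstar ha hb hab hρ) hwD]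
  refine intervalIntegral.integral_mono_on zero_le_one
    ((intervalIntegrable_mul_log_Gstar ha hb hab hρ).add hwD)
    (intervalIntegrable_of_abs_le (continuous_hEnt.comp_aestronglyMeasurable
      hσ.aestronglyMeasurable) fun x hx => abs_hEnt_le (hσ01' x hx).1 (hσ01' x hx).2)
    fun x hx => ?_
  calc _ = σ x * log (Gstar a b ρ x) + (1 - σ x) * log (1 - Gstar a b ρ x) := by
        simp only [logOdds]; ring
    _ ≤ hEnt (σ x) := mul_log_add_mul_log_le_hEnt (hσ01 x hx).1 (hσ01 x hx).2
        (Gstar_mem_Ioo ha hb hab x).1 (Gstar_mem_Ioo ha hb hab x).2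

theorem Jlow_Gstar_le_Jstar (ha : 0 < a) (hb : 0 < b) (hab : a * b < 1) (hρ : Monotone ρ)
    {σ : ℝ → ℝ} (hσ : Measurable σ) (hσ01 : ∀ x ∈ Icc (0:ℝ) 1, σ x ∈ Icc (0:ℝ) 1) :
    Jlow ρ (Gstar a b ρ) ≤ Jstar a b (fun x => ∫ t in (0:ℝ)..x, ρ t) σ := by
  set w := fun x => σ x - ρ x
  have hσi : IntervalIntegrable σ volume 0 1 :=
    intervalIntegrable_of_abs_le hσ.aestronglyMeasurable fun x hx => by
      rw [Set.uIcc_of_le zero_le_one] at hx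
      exact abs_le.2 ⟨by linarith [(hσ01 x hx).1], (hσ01 x hx).2⟩
  have hw : IntervalIntegrable w volume 0 1 := hσi.sub hρ.intervalIntegrable
  obtain ⟨x₀, hx₀, hmax⟩ := isCompact_Icc.exists_isMaxOn (nonempty_Icc.2 zero_le_one)
    (uIcc_of_le (zero_le_one' ℝ) ▸
      intervalIntegral.continuousOn_primitive_interval' hw left_mem_uIcc)
  have hprim : ∀ x ∈ Icc (0:ℝ) 1,
      (∫ t in (0:ℝ)..x, ρ t) - ∫ t in (0:ℝ)..x, σ t = -∫ t in (0:ℝ)..x, w t := fun x hx => by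
    rw [intervalIntegral.integral_sub
      (hσi.mono_set (uIcc_subset_uIcc_left (Icc_subset_uIcc hx))) hρ.intervalIntegrable]
    ring
  have hmin : sInf ((fun x => (∫ t in (0:ℝ)..x, ρ t) - ∫ t in (0:ℝ)..x, σ t) '' Icc 0 1) =
      -∫ t in (0:ℝ)..x₀, w t := by
    rw [Set.image_congr hprim]
    exact IsLeast.csInf_eq ⟨⟨x₀, hx₀, rfl⟩, by rintro _ ⟨x, hx, rfl⟩; exact neg_le_neg (hmax hx)⟩
  have hgibbs := Jlow_Gstar_add_le_integral_hEnt ha hb hab hρ hσ hσi hσ01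
  have hweight := integral_mul_ge_of_isMaxOn_primitive hw (monotone_logOdds_Gstar ha hb hab hρ)
    (logOdds_Gstar_mem_Icc ha hb hab 0).1 (logOdds_Gstar_mem_Icc ha hb hab 1).2 hx₀ hmax
  have htail := intervalIntegral.integral_interval_sub_left hw
    (hw.mono_set (uIcc_subset_uIcc_left (Icc_subset_uIcc hx₀)))
  rw [Jstar, hmin, hprim 1 (right_mem_Icc.2 zero_le_one), log_mul ha.ne' hb.ne']
  linear_combination hgibbs + hweight - log b * htail

theorem monotone_sub_Gstar (hρ : Monotone ρ) : Monotone fun x => ρ x - Gstar a b ρ x :=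
  fun x y h => by
    have := hρ h
    simp only [Gstar, min_def, max_def]
    split_ifs <;> linarith

theorem hEnt_Gstar_eq (ha : 0 < a) (hb : 0 < b) (hab : a * b < 1) (x : ℝ) :
    hEnt (Gstar a b ρ x) = ρ x * log (Gstar a b ρ x) + (1 - ρ x) * log (1 - Gstar a b ρ x)
      - log a * min (ρ x - Gstar a b ρ x) 0 + log b * max (ρ x - Gstar a b ρ x) 0 := by
  have h := sub_Gstar_mul_logOdds (ρ := ρ) ha hb hab x
  simp only [hEnt, logOdds] at h ⊢
  linear_combination -h

theorem Jstar_Gstar_eq_Jlow (ha : 0 < a) (hb : 0 < b) (hab : a * b < 1) (hρ : Monotone ρ) :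
    Jstar a b (fun x => ∫ t in (0:ℝ)..x, ρ t) (Gstar a b ρ) = Jlow ρ (Gstar a b ρ) := by
  set u := fun x => ρ x - Gstar a b ρ x
  have hu : Monotone u := monotone_sub_Gstar hρ
  have hneg : IntervalIntegrable (fun x => min (u x) 0) volume 0 1 :=
    Monotone.intervalIntegrable fun x y h => min_le_min_right 0 (hu h)
  have hpos : IntervalIntegrable (fun x => max (u x) 0) volume 0 1 :=
    Monotone.intervalIntegrable fun x y h => max_le_max_right 0 (hu h)
  have hprim : ∀ x,
      (∫ t in (0:ℝ)..x, ρ t) - ∫ t in (0:ℝ)..x, Gstar a b ρ t = ∫ t in (0:ℝ)..x, u t :=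
    fun x => (intervalIntegral.integral_sub hρ.intervalIntegrable
      (monotone_Gstar hρ).intervalIntegrable).symm
  have hmin : sInf ((fun x => (∫ t in (0:ℝ)..x, ρ t) - ∫ t in (0:ℝ)..x, Gstar a b ρ t) ''
      Icc 0 1) = ∫ t in (0:ℝ)..1, min (u t) 0 := by
    rw [Set.image_congr fun x _ => hprim x]
    exact MonotoneOn.sInf_image_primitive zero_le_one (hu.monotoneOn _)
  have hent : ∫ x in (0:ℝ)..1, hEnt (Gstar a b ρ x) = Jlow ρ (Gstar a b ρ)
      - log a * (∫ x in (0:ℝ)..1, min (u x) 0) + log b * ∫ x in (0:ℝ)..1, max (u x) 0 := by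
    simp only [hEnt_Gstar_eq ha hb hab]
    rw [intervalIntegral.integral_add ((intervalIntegrable_mul_log_Gstar ha hb hab hρ).sub
      (hneg.const_mul _)) (hpos.const_mul _), intervalIntegral.integral_sub
      (intervalIntegrable_mul_log_Gstar ha hb hab hρ) (hneg.const_mul _),
      intervalIntegral.integral_const_mul, intervalIntegral.integral_const_mul]
    rfl
  have hsplit : ∫ x in (0:ℝ)..1, u x =
      (∫ x in (0:ℝ)..1, min (u x) 0) + ∫ x in (0:ℝ)..1, max (u x) 0 := by
    rw [← intervalIntegral.integral_add hneg hpos]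
    simp only [min_add_max, add_zero]
  simp only [Jstar]
  rw [hmin, hprim 1, hent, hsplit, log_mul ha.ne' hb.ne']
  ring

end Gstar

theorem Jstar_congr {a b : ℝ} {ρ ρ' σ σ' : ℝ → ℝ} (hρ : EqOn ρ ρ' (Icc (0:ℝ) 1))
    (hσ : EqOn σ σ' (Icc (0:ℝ) 1)) :
    Jstar a b (fun x => ∫ t in (0:ℝ)..x, ρ t) σ =
      Jstar a b (fun x => ∫ t in (0:ℝ)..x, ρ' t) σ' := by
  have h1 : (1:ℝ) ∈ Icc (0:ℝ) 1 := right_mem_Icc.2 zero_le_one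
  simp only [Jstar]
  rw [intervalIntegral_congr_of_eqOn_Icc (f := fun x => hEnt (σ x))
      (fun x hx => congrArg hEnt (hσ hx)) h1,
    Set.image_congr fun x hx => by
      rw [intervalIntegral_congr_of_eqOn_Icc hρ hx, intervalIntegral_congr_of_eqOn_Icc hσ hx],
    intervalIntegral_congr_of_eqOn_Icc hρ h1, intervalIntegral_congr_of_eqOn_Icc hσ h1]

theorem Jlow_congr {ρ ρ' G G' : ℝ → ℝ} (hρ : EqOn ρ ρ' (Icc (0:ℝ) 1))
    (hG : EqOn G G' (Icc (0:ℝ) 1)) :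
    Jlow ρ G = Jlow ρ' G' :=
  intervalIntegral_congr_of_eqOn_Icc (fun x hx => by simp only [hρ hx, hG hx])
    (right_mem_Icc.2 zero_le_one)

theorem stmt9_general (a b : ℝ) (ha : 0 < a) (hb : 0 < b) (hab : a * b < 1)
    (ρ : ℝ → ℝ) (hmono : MonotoneOn ρ (Set.Icc 0 1)) :
    (∀ σ : ℝ → ℝ, Measurable σ → (∀ x ∈ Set.Icc (0:ℝ) 1, σ x ∈ Set.Icc (0:ℝ) 1) →
        Jstar a b (fun x => ∫ t in (0:ℝ)..x, ρ t)
            (fun x => min (max (ρ x) (a / (1 + a))) (1 / (1 + b)))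
          ≤ Jstar a b (fun x => ∫ t in (0:ℝ)..x, ρ t) σ)
      ∧ Jstar a b (fun x => ∫ t in (0:ℝ)..x, ρ t)
            (fun x => min (max (ρ x) (a / (1 + a))) (1 / (1 + b)))
          = Jlow ρ (fun x => min (max (ρ x) (a / (1 + a))) (1 / (1 + b))) := by
  set ρ' := IccExtend (zero_le_one' ℝ) fun x => ρ x
  have hρ' : Monotone ρ' := Monotone.IccExtend _ fun x y h => hmono x.2 y.2 h
  have hρρ' : EqOn ρ ρ' (Icc 0 1) := fun x hx => (IccExtend_of_mem _ (fun x => ρ x) hx).symm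
  have h_eq :
      Jstar a b (fun x => ∫ t in (0:ℝ)..x, ρ t) (Gstar a b ρ) = Jlow ρ (Gstar a b ρ) := by
    rw [Jstar_congr hρρ' (Gstar_congr hρρ'), Jlow_congr hρρ' (Gstar_congr hρρ')]
    exact Jstar_Gstar_eq_Jlow ha hb hab hρ'
  refine ⟨fun σ hσ hσ01 => ?_, h_eq⟩
  calc Jstar a b (fun x => ∫ t in (0:ℝ)..x, ρ t) (Gstar a b ρ)
      = Jlow ρ' (Gstar a b ρ') := h_eq.trans (Jlow_congr hρρ' (Gstar_congr hρρ'))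
    _ ≤ Jstar a b (fun x => ∫ t in (0:ℝ)..x, ρ' t) σ :=
        Jlow_Gstar_le_Jstar ha hb hab hρ' hσ hσ01
    _ = Jstar a b (fun x => ∫ t in (0:ℝ)..x, ρ t) σ := Jstar_congr hρρ'.symm (eqOn_refl _ _)

theorem stmt9 (a b : ℝ) (ha : 0 < a) (hb : 0 < b) (hab : a * b < 1)
    (ρ : ℝ → ℝ) (hmono : MonotoneOn ρ (Set.Icc 0 1))
    (hrange : ∀ x ∈ Set.Icc (0:ℝ) 1, ρ x ∈ Set.Icc (0:ℝ) 1)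
    (hrc : ∀ x ∈ Set.Ico (0:ℝ) 1, ContinuousWithinAt ρ (Set.Ici x) x) :
    (∀ σ : ℝ → ℝ, Measurable σ → (∀ x ∈ Set.Icc (0:ℝ) 1, σ x ∈ Set.Icc (0:ℝ) 1) →
        Jstar a b (fun x => ∫ t in (0:ℝ)..x, ρ t)
            (fun x => min (max (ρ x) (a / (1 + a))) (1 / (1 + b)))
          ≤ Jstar a b (fun x => ∫ t in (0:ℝ)..x, ρ t) σ)
      ∧ Jstar a b (fun x => ∫ t in (0:ℝ)..x, ρ t)
            (fun x => min (max (ρ x) (a / (1 + a))) (1 / (1 + b)))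
          = Jlow ρ (fun x => min (max (ρ x) (a / (1 + a))) (1 / (1 + b))) :=
  stmt9_general a b ha hb hab ρ hmono
end

section
/- Let a,b>0 with ab≥1. Then the minimum over y∈[0,1], F∈[0,y] and G∈[F, F+1−y] of the quantity y·h(F/y) + (1−y)·h((G−F)/(1−y)) + F·log a + y·log(1/(1+a)) + (1−y)·log(b/(1+b)) − (G−F)·log b equals log(min{a/(1+a)², b/(1+b)²}) = log( (max(a,b)) / (1+max(a,b))² ). (When y=0 the term y·h(F/y) is interpreted as 0, with necessarily F=0; similarly when y=1 the term (1−y)·h((G−F)/(1−y)) is interpreted as 0, with necessarily G=F.) -/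
open Real

lemma mul_log_sub_mul_log_le {x p : ℝ} (hx : 0 ≤ x) (hp : 0 < p) :
    x * log p - x * log x ≤ p - x := by
  rcases hx.eq_or_lt with rfl | hx
  · simpa using hp.le
  · have h := mul_le_mul_of_nonneg_left (log_le_sub_one_of_pos (div_pos hp hx)) hx.le
    rw [log_div hp.ne' hx.ne', mul_sub, mul_sub, mul_div_cancel₀ _ hx.ne', mul_one] at h
    linarith

lemma log_div_one_add {c : ℝ} (hc : 0 < c) : log (c / (1 + c)) = log c - log (1 + c) :=
  log_div hc.ne' (by positivity)

lemma log_div_one_add_sq {c : ℝ} (hc : 0 < c) :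
    log (c / (1 + c) ^ 2) = log c - 2 * log (1 + c) := by
  rw [log_div hc.ne' (by positivity), log_pow]
  push_cast
  ring

lemma log_one_add_inv {c : ℝ} (hc : 0 < c) : log (1 + c⁻¹) = log (1 + c) - log c := by
  rw [show 1 + c⁻¹ = (1 + c) / c by field_simp; ring, log_div (by positivity) hc.ne']

/-- Gibbs' inequality for the two-point distributions `(x, 1 - x)` and
`(c / (1 + c), 1 / (1 + c))`. -/
lemma neg_log_one_add_le_hEnt_sub {c x : ℝ} (hc : 0 < c) (hx₀ : 0 ≤ x) (hx₁ : x ≤ 1) :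
    -log (1 + c) ≤ hEnt x - x * log c := by
  have h1c : 0 < 1 + c := by positivity
  have hp := mul_log_sub_mul_log_le hx₀ (div_pos hc h1c)
  have hq := mul_log_sub_mul_log_le (sub_nonneg.2 hx₁) (inv_pos.2 h1c)
  have hsum : c / (1 + c) + (1 + c)⁻¹ = 1 := by field_simp; ring
  rw [log_div_one_add hc] at hp
  rw [log_inv] at hq
  rw [hEnt]
  linarith

lemma hEnt_div_one_add_sub {c : ℝ} (hc : 0 < c) :
    hEnt (c / (1 + c)) - c / (1 + c) * log c = -log (1 + c) := by
  rw [hEnt, show 1 - c / (1 + c) = (1 + c)⁻¹ by field_simp; ring, log_div_one_add hc, log_inv]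
  field_simp
  ring

lemma neg_mul_log_one_add_le_mul_hEnt_div {c z D : ℝ} (hc : 0 < c) (hD₀ : 0 ≤ D)
    (hDz : D ≤ z) :
    -(z * log (1 + c)) ≤ z * hEnt (D / z) - D * log c := by
  rcases (hD₀.trans hDz).eq_or_lt with rfl | hz
  · simp [le_antisymm hDz hD₀]
  · have h := mul_le_mul_of_nonneg_left
      (neg_log_one_add_le_hEnt_sub hc (div_nonneg hD₀ hz.le) ((div_le_one hz).2 hDz)) hz.le
    rwa [mul_sub, ← mul_assoc, mul_div_cancel₀ _ hz.ne', mul_neg] at h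

lemma div_one_add_sq_le_of_le {a b : ℝ} (hb : 0 < b) (hab : 1 ≤ a * b) (hba : b ≤ a) :
    a / (1 + a) ^ 2 ≤ b / (1 + b) ^ 2 := by
  have ha : 0 < a := hb.trans_le hba
  rw [div_le_div_iff₀ (by positivity) (by positivity)]
  nlinarith [mul_nonneg (sub_nonneg.2 hba) (sub_nonneg.2 hab)]

lemma min_div_one_add_sq {a b : ℝ} (ha : 0 < a) (hb : 0 < b) (hab : 1 ≤ a * b) :
    min (a / (1 + a) ^ 2) (b / (1 + b) ^ 2) = max a b / (1 + max a b) ^ 2 := by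
  rcases le_total a b with h | h
  · rw [max_eq_right h, min_eq_right (div_one_add_sq_le_of_le ha (by linarith) h)]
  · rw [max_eq_left h, min_eq_left (div_one_add_sq_le_of_le hb hab h)]

noncomputable def objective (a b y F G : ℝ) : ℝ :=
  y * hEnt (F / y) + (1 - y) * hEnt ((G - F) / (1 - y))
    + F * log a + y * log (1 / (1 + a))
    + (1 - y) * log (b / (1 + b)) - (G - F) * log b

lemma mul_log_add_mul_log_le_objective {a b y F G : ℝ} (ha : 0 < a) (hb : 0 < b) (hF₀ : 0 ≤ F)
    (hFy : F ≤ y) (hFG : F ≤ G) (hG : G ≤ F + 1 - y) :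
    y * log (a / (1 + a) ^ 2) + (1 - y) * log (b / (1 + b) ^ 2) ≤ objective a b y F G := by
  have hA := neg_mul_log_one_add_le_mul_hEnt_div (inv_pos.2 ha) hF₀ hFy
  have hB := neg_mul_log_one_add_le_mul_hEnt_div hb (sub_nonneg.2 hFG)
    (by linarith : G - F ≤ 1 - y)
  rw [log_one_add_inv ha, log_inv] at hA
  rw [objective, log_div_one_add_sq ha, log_div_one_add_sq hb, log_div_one_add hb, one_div,
    log_inv]
  linarith

theorem stmt12 (a b : ℝ) (ha : 0 < a) (hb : 0 < b) (hab : 1 ≤ a * b) :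
    IsLeast
      {v : ℝ | ∃ y F G : ℝ, y ∈ Set.Icc (0:ℝ) 1 ∧ F ∈ Set.Icc 0 y ∧
        G ∈ Set.Icc F (F + 1 - y) ∧
        v = y * hEnt (F / y) + (1 - y) * hEnt ((G - F) / (1 - y))
            + F * Real.log a + y * Real.log (1 / (1 + a))
            + (1 - y) * Real.log (b / (1 + b)) - (G - F) * Real.log b}
      (Real.log (min (a / (1 + a) ^ 2) (b / (1 + b) ^ 2)))
    ∧ min (a / (1 + a) ^ 2) (b / (1 + b) ^ 2) = max a b / (1 + max a b) ^ 2 := by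
  refine ⟨⟨?_, ?_⟩, min_div_one_add_sq ha hb hab⟩
  · rcases le_total (a / (1 + a) ^ 2) (b / (1 + b) ^ 2) with h | h
    · have hF : a⁻¹ / (1 + a⁻¹) ≤ 1 := (div_le_one (by positivity)).2 (by linarith)
      refine ⟨1, a⁻¹ / (1 + a⁻¹), a⁻¹ / (1 + a⁻¹), by simp, ⟨by positivity, hF⟩, by simp,
        ?_⟩
      have he := hEnt_div_one_add_sub (inv_pos.2 ha)
      rw [log_one_add_inv ha, log_inv] at he
      rw [min_eq_left h, log_div_one_add_sq ha, one_div, log_inv]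
      simp only [div_one, sub_self, zero_mul, one_mul, sub_zero, add_zero]
      linarith
    · have hG : b / (1 + b) ≤ 1 := (div_le_one (by positivity)).2 (by linarith)
      refine ⟨0, 0, b / (1 + b), by simp, by simp, ⟨by positivity, by simpa using hG⟩, ?_⟩
      have he := hEnt_div_one_add_sub hb
      rw [min_eq_right h, log_div_one_add_sq hb, log_div_one_add hb]
      simp only [zero_mul, zero_div, sub_zero, one_mul, zero_add, div_one, add_zero]
      linarith
  · rintro v ⟨y, F, G, ⟨hy₀, hy₁⟩, ⟨hF₀, hFy⟩, ⟨hFG, hG⟩, rfl⟩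
    refine le_trans ?_ (mul_log_add_mul_log_le_objective ha hb hF₀ hFy hFG hG)
    have hA := log_le_log (by positivity) (min_le_left (a / (1 + a) ^ 2) (b / (1 + b) ^ 2))
    have hB := log_le_log (by positivity) (min_le_right (a / (1 + a) ^ 2) (b / (1 + b) ^ 2))
    linarith [mul_le_mul_of_nonneg_left hA hy₀, mul_le_mul_of_nonneg_left hB (sub_nonneg.2 hy₁)]
end

section
/- Let a,b>0 with ab≤1 and let r∈[0,1]. Then min_{m∈[0,1]} { h(m) + max( (r−m)·log a, (m−r)·log b ) } equals: r·log a − log(1+a) if 0≤r≤a/(1+a); h(r) if a/(1+a)≤r≤1/(1+b); and (1−r)·log b − log(1+b) if 1/(1+b)≤r≤1. -/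
open Real Set

lemma mul_log_sub_mul_log_le_s13 {t q : ℝ} (ht : 0 ≤ t) (hq : 0 < q) :
    t * log q - t * log t ≤ q - t := by
  rcases ht.eq_or_lt with rfl | ht
  · simpa using hq.le
  calc t * log q - t * log t = t * log (q / t) := by rw [log_div hq.ne' ht.ne']; ring
    _ ≤ t * (q / t - 1) := mul_le_mul_of_nonneg_left (log_le_sub_one_of_pos (by positivity)) ht.le
    _ = q - t := by field_simp

lemma mul_log_add_mul_log_le_hEnt_s13 {p m : ℝ} (hp : p ∈ Ioo 0 1) (hm : m ∈ Icc 0 1) :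
    m * log p + (1 - m) * log (1 - p) ≤ hEnt m := by
  have h₁ := mul_log_sub_mul_log_le_s13 hm.1 hp.1
  have h₂ := mul_log_sub_mul_log_le_s13 (sub_nonneg.2 hm.2) (sub_pos.2 hp.2)
  unfold hEnt
  linarith

lemma hEnt_one_sub (m : ℝ) : hEnt (1 - m) = hEnt m := by
  simp only [hEnt, sub_sub_cancel]
  ring

lemma one_sub_div_one_add {a : ℝ} (ha : 0 < a) : 1 - a / (1 + a) = 1 / (1 + a) := by
  field_simp
  ring

lemma hEnt_div_one_add {a : ℝ} (ha : 0 < a) :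
    hEnt (a / (1 + a)) = a / (1 + a) * log a - log (1 + a) := by
  have h : (0 : ℝ) < 1 + a := by linarith
  rw [hEnt, one_sub_div_one_add ha, log_div ha.ne' h.ne', one_div, log_inv]
  field_simp
  ring

lemma div_one_add_mem_Ioo {a : ℝ} (ha : 0 < a) : a / (1 + a) ∈ Ioo 0 1 :=
  ⟨by positivity, (div_lt_one (by linarith)).2 (by linarith)⟩

lemma isLeast_hEnt_add {p : ℝ} (hp : p ∈ Ioo 0 1) {M : ℝ → ℝ}
    (hM : ∀ m ∈ Icc (0 : ℝ) 1, M p + (p - m) * (log p - log (1 - p)) ≤ M m) :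
    IsLeast {v | ∃ m ∈ Icc (0 : ℝ) 1, v = hEnt m + M m} (hEnt p + M p) := by
  refine ⟨⟨p, Ioo_subset_Icc_self hp, rfl⟩, ?_⟩
  rintro _ ⟨m, hm, rfl⟩
  have := mul_log_add_mul_log_le_hEnt_s13 hp hm
  have := hM m hm
  unfold hEnt at *
  linarith

noncomputable def hEntObjective (a b r m : ℝ) : ℝ :=
  hEnt m + max ((r - m) * log a) ((m - r) * log b)

lemma hEntObjective_one_sub (a b r m : ℝ) :
    hEntObjective a b r (1 - m) = hEntObjective b a (1 - r) m := by
  rw [hEntObjective, hEntObjective, hEnt_one_sub, max_comm]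
  ring_nf

lemma setOf_hEntObjective_swap (a b r : ℝ) :
    {v | ∃ m ∈ Icc (0 : ℝ) 1, v = hEntObjective a b r m} =
      {v | ∃ m ∈ Icc (0 : ℝ) 1, v = hEntObjective b a (1 - r) m} := by
  ext v
  constructor
  · rintro ⟨m, ⟨hm₀, hm₁⟩, rfl⟩
    refine ⟨1 - m, ⟨by linarith, by linarith⟩, ?_⟩
    rw [← hEntObjective_one_sub, sub_sub_cancel]
  · rintro ⟨m, ⟨hm₀, hm₁⟩, rfl⟩
    exact ⟨1 - m, ⟨by linarith, by linarith⟩, (hEntObjective_one_sub a b r m).symm⟩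

section

variable {a b r : ℝ} (ha : 0 < a) (hb : 0 < b)
include ha hb

lemma isLeast_hEntObjective_of_le_div_one_add (hab : a * b ≤ 1) (hr : r ≤ a / (1 + a)) :
    IsLeast {v | ∃ m ∈ Icc (0 : ℝ) 1, v = hEntObjective a b r m}
      (r * log a - log (1 + a)) := by
  set p := a / (1 + a)
  have hlab : log a + log b ≤ 0 := by
    rw [← log_mul ha.ne' hb.ne']
    exact log_nonpos (by positivity) hab
  have hslope : log p - log (1 - p) = log a := by
    rw [one_sub_div_one_add ha, log_div ha.ne' (by linarith), one_div, log_inv]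
    ring
  have hMp : max ((r - p) * log a) ((p - r) * log b) = (r - p) * log a :=
    max_eq_left (by nlinarith [mul_nonneg (sub_nonneg.2 hr) (neg_nonneg.2 hlab)])
  have key : IsLeast {v | ∃ m ∈ Icc (0 : ℝ) 1, v = hEntObjective a b r m}
      (hEnt p + max ((r - p) * log a) ((p - r) * log b)) :=
    isLeast_hEnt_add (div_one_add_mem_Ioo ha) fun m _ ↦ by
      rw [hMp, hslope]
      linarith [le_max_left ((r - m) * log a) ((m - r) * log b)]
  convert key using 1
  rw [hMp, hEnt_div_one_add ha]
  ring

lemma isLeast_hEntObjective_of_div_one_add_le (hab : a * b ≤ 1) (hr : 1 / (1 + b) ≤ r) :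
    IsLeast {v | ∃ m ∈ Icc (0 : ℝ) 1, v = hEntObjective a b r m}
      ((1 - r) * log b - log (1 + b)) := by
  rw [setOf_hEntObjective_swap]
  refine isLeast_hEntObjective_of_le_div_one_add hb ha (by linarith [mul_comm a b]) ?_
  linarith [one_sub_div_one_add hb]

lemma isLeast_hEntObjective_of_mem_Icc (hr : r ∈ Icc (a / (1 + a)) (1 / (1 + b))) :
    IsLeast {v | ∃ m ∈ Icc (0 : ℝ) 1, v = hEntObjective a b r m} (hEnt r) := by
  obtain ⟨hr₁, hr₂⟩ := hr
  have hr : r ∈ Ioo 0 1 :=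
    ⟨(div_one_add_mem_Ioo ha).1.trans_le hr₁,
      hr₂.trans_lt ((div_lt_one (by linarith)).2 (by linarith))⟩
  have hr' : 0 < 1 - r := sub_pos.2 hr.2
  have hloga : log a ≤ log r - log (1 - r) := by
    rw [le_sub_iff_add_le, ← log_mul ha.ne' hr'.ne']
    refine log_le_log (mul_pos ha hr') ?_
    nlinarith [(div_le_iff₀ (by linarith : (0 : ℝ) < 1 + a)).1 hr₁]
  have hlogb : log r - log (1 - r) ≤ -log b := by
    rw [sub_le_iff_le_add, le_neg_add_iff_add_le, ← log_mul hb.ne' hr.1.ne']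
    refine log_le_log (mul_pos hb hr.1) ?_
    nlinarith [(le_div_iff₀ (by linarith : (0 : ℝ) < 1 + b)).1 hr₂]
  have key : IsLeast {v | ∃ m ∈ Icc (0 : ℝ) 1, v = hEntObjective a b r m}
      (hEnt r + max ((r - r) * log a) ((r - r) * log b)) :=
    isLeast_hEnt_add hr fun m _ ↦ by
      simp only [sub_self, zero_mul, max_self, zero_add]
      rcases le_total r m with hrm | hmr
      · nlinarith [le_max_left ((r - m) * log a) ((m - r) * log b)]
      · nlinarith [le_max_right ((r - m) * log a) ((m - r) * log b)]
  simpa only [sub_self, zero_mul, max_self, add_zero] using key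

end

theorem stmt13_general (a b : ℝ) (ha : 0 < a) (hb : 0 < b) (hab : a * b ≤ 1)
    (r : ℝ) :
    IsLeast
      {v : ℝ | ∃ m ∈ Set.Icc (0:ℝ) 1,
        v = hEnt m + max ((r - m) * Real.log a) ((m - r) * Real.log b)}
      (if r ≤ a / (1 + a) then r * Real.log a - Real.log (1 + a)
       else if r ≤ 1 / (1 + b) then hEnt r
       else (1 - r) * Real.log b - Real.log (1 + b)) := by
  split_ifs with hra hrb
  · exact isLeast_hEntObjective_of_le_div_one_add ha hb hab hra
  · exact isLeast_hEntObjective_of_mem_Icc ha hb ⟨(not_le.1 hra).le, hrb⟩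
  · exact isLeast_hEntObjective_of_div_one_add_le ha hb hab (not_le.1 hrb).le

theorem stmt13 (a b : ℝ) (ha : 0 < a) (hb : 0 < b) (hab : a * b ≤ 1)
    (r : ℝ) (hr : r ∈ Set.Icc (0:ℝ) 1) :
    IsLeast
      {v : ℝ | ∃ m ∈ Set.Icc (0:ℝ) 1,
        v = hEnt m + max ((r - m) * Real.log a) ((m - r) * Real.log b)}
      (if r ≤ a / (1 + a) then r * Real.log a - Real.log (1 + a)
       else if r ≤ 1 / (1 + b) then hEnt r
       else (1 - r) * Real.log b - Real.log (1 + b)) :=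
  stmt13_general a b ha hb hab r
end
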